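/- arXiv:2506.07624 — 2 statements merged into one kernel-verified Lean document; each statement's English description precedes it below -/
import Mathlib

section
/- Let L be a real symmetric n×n matrix (e.g., the symmetric normalized graph Laplacian) and for k = 0,…,K let W_k be real d×d matrices with W_kᵀ = −W_k. Then the graph-wise Jacobian J = Σ_{k=0}^K (W_kᵀ ⊗ T_k(L)) of the ChebNet ODE dX/dt = Σ_{k=0}^K T_k(L)·X·W_k is antisymmetric, and every complex eigenvalue λ of J satisfies Re(λ) = 0. -/
open Matrix
open scoped Kronecker

/-- Evaluation of the `k`-th Chebyshev polynomial of the first kind at a square matrix. -/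
noncomputable def chebAt {n : ℕ} (L : Matrix (Fin n) (Fin n) ℝ) (k : ℕ) :
    Matrix (Fin n) (Fin n) ℝ :=
  Polynomial.aeval L (Polynomial.Chebyshev.T ℝ k)

lemma aeval_transpose {n : ℕ} (L : Matrix (Fin n) (Fin n) ℝ) (hL : Lᵀ = L)
    (p : Polynomial ℝ) : (Polynomial.aeval L p)ᵀ = Polynomial.aeval L p := by
  induction p using Polynomial.induction_on' with
  | add p q hp hq => simp [Matrix.transpose_add, hp, hq]
  | monomial i a =>
      simp [Polynomial.aeval_monomial, Matrix.transpose_smul, Matrix.transpose_pow, hL,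
        Algebra.algebraMap_eq_smul_one, smul_pow, mul_comm]

/-- **Purely imaginary eigenvalues of the ChebNet ODE Jacobian.**
If `L` is symmetric and each `W_k` is antisymmetric, then the graph-wise Jacobian
`J = ∑_{k=0}^K W_kᵀ ⊗ T_k(L)` of the ChebNet ODE is antisymmetric and all of its
complex eigenvalues are purely imaginary. -/
theorem chebnet_ode_jacobian_purely_imaginary (n d K : ℕ)
    (L : Matrix (Fin n) (Fin n) ℝ) (hL : Lᵀ = L)
    (W : ℕ → Matrix (Fin d) (Fin d) ℝ) (hW : ∀ k ≤ K, (W k)ᵀ = -W k) :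
    (∑ k ∈ Finset.range (K + 1), (W k)ᵀ ⊗ₖ chebAt L k)ᵀ =
        -(∑ k ∈ Finset.range (K + 1), (W k)ᵀ ⊗ₖ chebAt L k) ∧
    ∀ (lam : ℂ) (v : Fin d × Fin n → ℂ), v ≠ 0 →
      ((∑ k ∈ Finset.range (K + 1), (W k)ᵀ ⊗ₖ chebAt L k).map
          (Complex.ofReal)).mulVec v = lam • v →
      lam.re = 0 := by
  set J := ∑ k ∈ Finset.range (K + 1), (W k)ᵀ ⊗ₖ chebAt L k with hJ
  have hcheb : ∀ k, (chebAt L k)ᵀ = chebAt L k := fun k =>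
    aeval_transpose L hL _
  have hskew : Jᵀ = -J := by
    rw [hJ, Matrix.transpose_sum, ← Finset.sum_neg_distrib]
    refine Finset.sum_congr rfl fun k hk => ?_
    have hWk := hW k (Finset.mem_range_succ_iff.mp hk)
    ext ⟨i, j⟩ ⟨i', j'⟩
    have hC := congrFun (congrFun (hcheb k) j) j'
    have hw := congrFun (congrFun hWk i) i'
    simp only [Matrix.transpose_apply, Matrix.kroneckerMap_apply, Matrix.neg_apply] at *
    rw [hw, hC]
    ring
  refine ⟨hskew, ?_⟩
  intro lam v hv hev
  set A := J.map (Complex.ofReal) with hA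
  have hAH : Aᴴ = -A := by
    ext i j
    have := congrFun (congrFun hskew i) j
    rw [Matrix.transpose_apply, Matrix.neg_apply] at this
    simp only [hA, Matrix.conjTranspose_apply, Matrix.map_apply, Matrix.neg_apply,
      Complex.star_def, this, Complex.ofReal_neg, map_neg, Complex.conj_ofReal]
  have hc : star v ⬝ᵥ v ≠ 0 := by
    open scoped ComplexOrder in
    exact fun h => hv (dotProduct_star_self_eq_zero.mp h)
  have h1 : star v ⬝ᵥ (A *ᵥ v) = lam * (star v ⬝ᵥ v) := by
    rw [hev, dotProduct_smul, smul_eq_mul]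
  have h2 : star (A *ᵥ v) ⬝ᵥ v = (starRingEnd ℂ) lam * (star v ⬝ᵥ v) := by
    rw [hev]
    simp [dotProduct, Finset.mul_sum, mul_assoc]
  have h3 : star (A *ᵥ v) ⬝ᵥ v = -(lam * (star v ⬝ᵥ v)) := by
    rw [Matrix.star_mulVec, ← Matrix.dotProduct_mulVec, hAH, Matrix.neg_mulVec,
      dotProduct_neg, h1]
  have key : ((starRingEnd ℂ) lam + lam) * (star v ⬝ᵥ v) = 0 := by
    have := h2.symm.trans h3
    ring_nf
    ring_nf at this
    linear_combination this
  rcases mul_eq_zero.mp key with h | h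
  · have hre := congrArg Complex.re h
    simp [Complex.add_re, Complex.conj_re] at hre
    linarith
  · exact absurd h hc
end

section
/- Let L be a real symmetric n×n matrix, let W_k (k = 0,…,K) be real d×d matrices with W_kᵀ = −W_k, let ε > 0, and let J = I + ε·Σ_{k=0}^K (W_kᵀ ⊗ T_k(L)) be the layer-wise Jacobian of the Stable-ChebNet update X^{(l+1)} = X^{(l)} + ε·Σ_{k=0}^K T_k(L)·X^{(l)}·W_k. Then, writing A = Σ_{k=0}^K (W_kᵀ ⊗ T_k(L)), the ℓ2 operator norm of J satisfies ‖J‖ = √(1 + ε²·‖A‖²); in particular 1 ≤ ‖J‖ ≤ 1 + (ε²/2)·‖A‖², so ‖J‖ = 1 + O(ε²). -/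
open Matrix
open scoped Kronecker

/-- The ℓ2 operator norm of a real square matrix. -/
noncomputable def l2OpNorm {m : Type*} [Fintype m] [DecidableEq m]
    (M : Matrix m m ℝ) : ℝ :=
  ‖Matrix.toEuclideanCLM (𝕜 := ℝ) M‖

/-!
Each `W_kᵀ ⊗ T_k(L)` is skew-symmetric, since `T_k(L)` is symmetric with `L`, so `A` is
skew-symmetric and `⟪A x, x⟫ = 0` for all `x`. Hence `‖(I + εA) x‖² = ‖x‖² + ε² ‖A x‖²`, and taking
suprema over unit vectors gives `‖I + εA‖² = 1 + ε² ‖A‖²`. The two bounds follow from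
`1 ≤ √(1 + t) ≤ 1 + t / 2` for `t ≥ 0`.
-/

open scoped InnerProductSpace

theorem Matrix.IsSymm.aeval {n R : Type*} [Fintype n] [DecidableEq n] [CommSemiring R]
    {L : Matrix n n R} (hL : L.IsSymm) (p : Polynomial R) : (Polynomial.aeval L p).IsSymm := by
  induction p using Polynomial.induction_on' with
  | add p q hp hq => simpa only [map_add] using hp.add hq
  | monomial k a =>
    simpa only [Polynomial.aeval_monomial, Algebra.algebraMap_eq_smul_one, smul_mul_assoc,
      one_mul] using (hL.pow k).smul a

theorem Matrix.transpose_kronecker_of_transpose_eq_neg {l m R : Type*} [Ring R]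
    {A : Matrix l l R} {B : Matrix m m R} (hA : Aᵀ = -A) (hB : B.IsSymm) :
    (A ⊗ₖ B)ᵀ = -(A ⊗ₖ B) := by
  rw [← kroneckerMap_transpose, hA, hB.eq]
  ext i j
  simp

theorem Matrix.toEuclideanCLM_mem_skewAdjoint {m : Type*} [Fintype m] [DecidableEq m]
    {A : Matrix m m ℝ} (hA : Aᵀ = -A) :
    toEuclideanCLM (𝕜 := ℝ) A ∈ skewAdjoint (EuclideanSpace ℝ m →L[ℝ] EuclideanSpace ℝ m) := by
  rw [skewAdjoint.mem_iff, ← map_star, star_eq_conjTranspose,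
    conjTranspose_eq_transpose_of_trivial, hA, map_neg]

namespace ContinuousLinearMap

theorem opNorm_sq_le_of_norm_apply_sq_le {E F : Type*} [SeminormedAddCommGroup E]
    [SeminormedAddCommGroup F] [NormedSpace ℝ E] [NormedSpace ℝ F] {T : E →L[ℝ] F} {C : ℝ}
    (hC : 0 ≤ C) (h : ∀ x, ‖T x‖ ^ 2 ≤ C * ‖x‖ ^ 2) : ‖T‖ ^ 2 ≤ C := by
  have : ‖T‖ ≤ √C := T.opNorm_le_bound (Real.sqrt_nonneg C) fun x ↦ by
    rw [← Real.sqrt_sq (norm_nonneg x), ← Real.sqrt_mul hC]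
    exact Real.le_sqrt_of_sq_le (h x)
  calc ‖T‖ ^ 2 ≤ √C ^ 2 := by gcongr
    _ = C := Real.sq_sqrt hC

theorem one_add_smul_apply {E : Type*} [TopologicalSpace E] [AddCommGroup E] [Module ℝ E]
    [ContinuousAdd E] [ContinuousConstSMul ℝ E] (T : E →L[ℝ] E) (ε : ℝ) (x : E) :
    (1 + ε • T) x = x + ε • T x :=
  rfl

variable {E : Type*} [NormedAddCommGroup E] [InnerProductSpace ℝ E]

theorem inner_apply_self_eq_zero_of_mem_skewAdjoint [CompleteSpace E]
    {T : E →L[ℝ] E} (hT : T ∈ skewAdjoint (E →L[ℝ] E)) (x : E) : ⟪T x, x⟫_ℝ = 0 := by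
  have h := adjoint_inner_left T x x
  rw [← star_eq_adjoint, skewAdjoint.mem_iff.mp hT, _root_.neg_apply, inner_neg_left] at h
  linarith [real_inner_comm x (T x)]

theorem norm_add_smul_apply_sq {T : E →L[ℝ] E} (hT : ∀ x, ⟪T x, x⟫_ℝ = 0) (ε : ℝ) (x : E) :
    ‖x + ε • T x‖ ^ 2 = ‖x‖ ^ 2 + ε ^ 2 * ‖T x‖ ^ 2 := by
  rw [norm_add_sq_real, real_inner_smul_right, real_inner_comm, hT x, norm_smul,
    Real.norm_eq_abs, mul_pow, sq_abs]
  ring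

theorem one_le_norm_one_add_smul [Nontrivial E] {T : E →L[ℝ] E} (hT : ∀ x, ⟪T x, x⟫_ℝ = 0)
    (ε : ℝ) : 1 ≤ ‖1 + ε • T‖ := by
  obtain ⟨x, hx⟩ := exists_norm_eq E zero_le_one
  have hsq : ‖x‖ ^ 2 ≤ ‖(1 + ε • T) x‖ ^ 2 := by
    rw [one_add_smul_apply, norm_add_smul_apply_sq hT]
    nlinarith [sq_nonneg ε, sq_nonneg ‖T x‖]
  calc 1 = ‖x‖ := hx.symm
    _ ≤ ‖(1 + ε • T) x‖ := (pow_le_pow_iff_left₀ (norm_nonneg _) (norm_nonneg _) two_ne_zero).mp hsq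
    _ ≤ ‖1 + ε • T‖ := by simpa [hx] using (1 + ε • T).le_opNorm x

theorem norm_one_add_smul_sq [Nontrivial E] {T : E →L[ℝ] E} (hT : ∀ x, ⟪T x, x⟫_ℝ = 0)
    (ε : ℝ) : ‖1 + ε • T‖ ^ 2 = 1 + ε ^ 2 * ‖T‖ ^ 2 := by
  apply le_antisymm
  · refine opNorm_sq_le_of_norm_apply_sq_le (by positivity) fun x ↦ ?_
    rw [one_add_smul_apply, norm_add_smul_apply_sq hT]
    calc ‖x‖ ^ 2 + ε ^ 2 * ‖T x‖ ^ 2 ≤ ‖x‖ ^ 2 + ε ^ 2 * (‖T‖ * ‖x‖) ^ 2 := by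
          gcongr; exact T.le_opNorm x
      _ = (1 + ε ^ 2 * ‖T‖ ^ 2) * ‖x‖ ^ 2 := by ring
  · have hJ := one_le_norm_one_add_smul hT ε
    have hεT : ‖ε • T‖ ^ 2 ≤ ‖1 + ε • T‖ ^ 2 - 1 := by
      refine opNorm_sq_le_of_norm_apply_sq_le (by nlinarith) fun x ↦ ?_
      have hx := norm_add_smul_apply_sq hT ε x
      rw [← one_add_smul_apply] at hx
      have := (1 + ε • T).le_opNorm x
      rw [_root_.smul_apply, norm_smul, Real.norm_eq_abs, mul_pow, sq_abs]
      nlinarith [norm_nonneg ((1 + ε • T) x), norm_nonneg x]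
    rw [norm_smul, Real.norm_eq_abs, mul_pow, sq_abs] at hεT
    linarith

end ContinuousLinearMap

theorem stable_chebnet_layer_jacobian_norm_general (n d K : ℕ) (hn : 0 < n) (hd : 0 < d)
    (L : Matrix (Fin n) (Fin n) ℝ) (hL : Lᵀ = L)
    (W : ℕ → Matrix (Fin d) (Fin d) ℝ) (hW : ∀ k ≤ K, (W k)ᵀ = -W k)
    (ε : ℝ)
    (A : Matrix (Fin d × Fin n) (Fin d × Fin n) ℝ)
    (hA : A = ∑ k ∈ Finset.range (K + 1), (W k)ᵀ ⊗ₖ chebAt L k) :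
    l2OpNorm (1 + ε • A) = Real.sqrt (1 + ε ^ 2 * l2OpNorm A ^ 2) ∧
    1 ≤ l2OpNorm (1 + ε • A) ∧
    l2OpNorm (1 + ε • A) ≤ 1 + ε ^ 2 / 2 * l2OpNorm A ^ 2 := by
  have hA_skew : Aᵀ = -A := by
    rw [hA, transpose_sum, ← Finset.sum_neg_distrib]
    refine Finset.sum_congr rfl fun k hk ↦ ?_
    have hWk : (W k)ᵀᵀ = -(W k)ᵀ := by
      rw [transpose_transpose, hW k (Nat.lt_succ_iff.mp (Finset.mem_range.mp hk)), neg_neg]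
    exact transpose_kronecker_of_transpose_eq_neg hWk (IsSymm.aeval hL _)
  have : NeZero n := ⟨hn.ne'⟩
  have : NeZero d := ⟨hd.ne'⟩
  have hT := ContinuousLinearMap.inner_apply_self_eq_zero_of_mem_skewAdjoint
    (toEuclideanCLM_mem_skewAdjoint hA_skew)
  have hnorm : l2OpNorm (1 + ε • A) = √(1 + ε ^ 2 * l2OpNorm A ^ 2) := by
    have hJ : l2OpNorm (1 + ε • A) = ‖1 + ε • toEuclideanCLM (𝕜 := ℝ) A‖ := by simp [l2OpNorm]
    rw [hJ, l2OpNorm, ← ContinuousLinearMap.norm_one_add_smul_sq hT, Real.sqrt_sq (norm_nonneg _)]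
  have ht : 0 ≤ ε ^ 2 * l2OpNorm A ^ 2 := by positivity
  refine ⟨hnorm, hnorm ▸ Real.one_le_sqrt.mpr (by linarith), ?_⟩
  rw [hnorm, mul_comm_div, ← mul_div_assoc]
  exact Real.sqrt_one_add_le (by linarith)

/-- **Layer-wise stability of Stable-ChebNet.**
With `L` symmetric, each `W_k` antisymmetric, `ε > 0`, and
`A = ∑_{k=0}^K W_kᵀ ⊗ T_k(L)`, the Jacobian `J = I + ε A` of the Stable-ChebNet
update satisfies `‖J‖ = √(1 + ε² ‖A‖²)`, hence `1 ≤ ‖J‖ ≤ 1 + (ε²/2) ‖A‖²`. -/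
theorem stable_chebnet_layer_jacobian_norm (n d K : ℕ) (hn : 0 < n) (hd : 0 < d)
    (L : Matrix (Fin n) (Fin n) ℝ) (hL : Lᵀ = L)
    (W : ℕ → Matrix (Fin d) (Fin d) ℝ) (hW : ∀ k ≤ K, (W k)ᵀ = -W k)
    (ε : ℝ) (hε : 0 < ε)
    (A : Matrix (Fin d × Fin n) (Fin d × Fin n) ℝ)
    (hA : A = ∑ k ∈ Finset.range (K + 1), (W k)ᵀ ⊗ₖ chebAt L k) :
    l2OpNorm (1 + ε • A) = Real.sqrt (1 + ε ^ 2 * l2OpNorm A ^ 2) ∧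
    1 ≤ l2OpNorm (1 + ε • A) ∧
    l2OpNorm (1 + ε • A) ≤ 1 + ε ^ 2 / 2 * l2OpNorm A ^ 2 :=
  stable_chebnet_layer_jacobian_norm_general n d K hn hd L hL W hW ε A hA
end
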